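/- f is strictly antitone (strictly decreasing) on the interval (0, T/2] and strictly monotone (strictly increasing) on the interval [T/2, T). -/

import Mathlib

open Real in
/-- The Gamma-extended binomial-based pseudo-likelihood
`f(x) = Γ(T+1)/(Γ(x+1)·Γ(T−x+1)) · (x/T)^x · ((T−x)/T)^(T−x)`. -/
noncomputable def binPseudoLik (T x : ℝ) : ℝ :=
  Gamma (T + 1) / (Gamma (x + 1) * Gamma (T - x + 1)) *
    (x / T) ^ x * ((T - x) / T) ^ (T - x)

section BinPseudoAux

open Real Filter Set Finset

/-- Strict convexity from explicit first and second derivatives on an open convex set. -/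
lemma strictConvexOn_of_hasDerivAt2 {D : Set ℝ} (hD : Convex ℝ D) (hDo : IsOpen D)
    {f f' f'' : ℝ → ℝ}
    (h1 : ∀ x ∈ D, HasDerivAt f (f' x) x)
    (h2 : ∀ x ∈ D, HasDerivAt f' (f'' x) x)
    (hpos : ∀ x ∈ D, 0 < f'' x) : StrictConvexOn ℝ D f := by
  apply strictConvexOn_of_deriv2_pos hD (fun x hx => (h1 x hx).continuousAt.continuousWithinAt)
  intro x hx
  rw [hDo.interior_eq] at hx
  have hev : deriv f =ᶠ[nhds x] f' := by
    filter_upwards [hDo.mem_nhds hx] with y hy using (h1 y hy).deriv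
  have h2' : deriv^[2] f x = deriv (deriv f) x := by
    simp [Function.iterate_succ_apply']
  rw [h2', hev.deriv_eq, (h2 x hx).deriv]
  exact hpos x hx

/-- Convexity from explicit first and second derivatives on an open convex set. -/
lemma convexOn_of_hasDerivAt2 {D : Set ℝ} (hD : Convex ℝ D) (hDo : IsOpen D)
    {f f' f'' : ℝ → ℝ}
    (h1 : ∀ x ∈ D, HasDerivAt f (f' x) x)
    (h2 : ∀ x ∈ D, HasDerivAt f' (f'' x) x)
    (hnn : ∀ x ∈ D, 0 ≤ f'' x) : ConvexOn ℝ D f := by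
  apply convexOn_of_hasDerivWithinAt2_nonneg hD
    (fun x hx => (h1 x hx).continuousAt.continuousWithinAt)
    (fun x hx => ((h1 x (by rwa [hDo.interior_eq] at hx)).hasDerivWithinAt))
    (fun x hx => ((h2 x (by rwa [hDo.interior_eq] at hx)).hasDerivWithinAt))
    (fun x hx => hnn x (by rwa [hDo.interior_eq] at hx))

/-- A pointwise limit of convex functions is convex. -/
lemma convexOn_of_tendsto' {s : Set ℝ} {f : ℝ → ℝ} {F : ℕ → ℝ → ℝ}
    (hs : Convex ℝ s) (hc : ∀ n, ConvexOn ℝ s (F n))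
    (hlim : ∀ x ∈ s, Tendsto (fun n => F n x) atTop (nhds (f x))) :
    ConvexOn ℝ s f := by
  refine ⟨hs, fun x hx y hy a b ha hb hab => ?_⟩
  have hmem : a • x + b • y ∈ s := hs hx hy ha hb hab
  refine le_of_tendsto_of_tendsto' (hlim _ hmem)
    (((hlim x hx).const_mul a).add ((hlim y hy).const_mul b)) (fun n => ?_)
  simpa [smul_eq_mul] using (hc n).2 hx hy ha hb hab

lemma strictConvexOn_congr' {s : Set ℝ} {f g : ℝ → ℝ} (hf : StrictConvexOn ℝ s f)
    (h : ∀ x ∈ s, f x = g x) : StrictConvexOn ℝ s g := by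
  refine ⟨hf.1, fun x hx y hy hxy a b ha hb hab => ?_⟩
  rw [← h _ hx, ← h _ hy, ← h _ (hf.1 hx hy ha.le hb.le hab)]
  exact hf.2 hx hy hxy ha hb hab

lemma strictConvexOn_comp_sub {s : Set ℝ} {f : ℝ → ℝ} (hf : StrictConvexOn ℝ s f) (T : ℝ)
    {t : Set ℝ} (ht : Convex ℝ t) (h : ∀ x ∈ t, T - x ∈ s) :
    StrictConvexOn ℝ t (fun x => f (T - x)) := by
  refine ⟨ht, fun x hx y hy hxy a b ha hb hab => ?_⟩
  have he : T - (a • x + b • y) = a • (T - x) + b • (T - y) := by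
    simp only [smul_eq_mul]; linear_combination (-T) * hab
  show f (T - (a • x + b • y)) < a • f (T - x) + b • f (T - y)
  rw [he]
  exact hf.2 (h x hx) (h y hy) (fun hc => hxy (by linarith)) ha hb hab

lemma convexOn_comp_sub {s : Set ℝ} {f : ℝ → ℝ} (hf : ConvexOn ℝ s f) (T : ℝ)
    {t : Set ℝ} (ht : Convex ℝ t) (h : ∀ x ∈ t, T - x ∈ s) :
    ConvexOn ℝ t (fun x => f (T - x)) := by
  refine ⟨ht, fun x hx y hy a b ha hb hab => ?_⟩
  have he : T - (a • x + b • y) = a • (T - x) + b • (T - y) := by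
    simp only [smul_eq_mul]; linear_combination (-T) * hab
  show f (T - (a • x + b • y)) ≤ a • f (T - x) + b • f (T - y)
  rw [he]
  exact hf.2 (h x hx) (h y hy) ha hb hab

/-- The explicitly strictly convex part `y log y − (y+1/2) log(y+1/2)`. -/
noncomputable def auxR (y : ℝ) : ℝ := y * Real.log y - (y + 1/2) * Real.log (y + 1/2)

/-- Approximants to `(y+1/2) log(y+1/2) − log Γ(y+1)` built from Euler's `GammaSeq`. -/
noncomputable def auxF (n : ℕ) (y : ℝ) : ℝ :=
  (y + 1/2) * Real.log (y + 1/2) + (∑ j ∈ Finset.range (n + 2), Real.log (y + 1 + j))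
    - ((y + 1) * Real.log (n + 1) + Real.log (Nat.factorial (n + 1)))

/-- The convex Gamma part `(y+1/2) log(y+1/2) − log Γ(y+1)`. -/
noncomputable def auxV (y : ℝ) : ℝ :=
  (y + 1/2) * Real.log (y + 1/2) - Real.log (Real.Gamma (y + 1))

lemma hasDerivAt_shift_mul_log {c y : ℝ} (h : y + c ≠ 0) :
    HasDerivAt (fun t => (t + c) * Real.log (t + c)) (Real.log (y + c) + 1) y := by
  have := (Real.hasDerivAt_mul_log h).comp y ((hasDerivAt_id y).add_const c)
  simpa [Function.comp_def] using this

lemma auxR_strictConvex : StrictConvexOn ℝ (Set.Ioi (0:ℝ)) auxR := by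
  refine strictConvexOn_of_hasDerivAt2 (convex_Ioi 0) isOpen_Ioi
    (f' := fun y => Real.log y - Real.log (y + 1/2))
    (f'' := fun y => y⁻¹ - (y + 1/2)⁻¹) ?_ ?_ ?_
  · intro y hy
    have hy : (0:ℝ) < y := hy
    have h1 := Real.hasDerivAt_mul_log hy.ne'
    have h2 := hasDerivAt_shift_mul_log (c := 1/2) (y := y) (by linarith)
    have := h1.sub h2
    exact this.congr_deriv (by ring)
  · intro y hy
    have hy : (0:ℝ) < y := hy
    have h1 := Real.hasDerivAt_log hy.ne'
    have h2 : HasDerivAt (fun t => Real.log (t + 1/2)) ((y + 1/2)⁻¹) y := by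
      have := (Real.hasDerivAt_log (x := y + 1/2) (by linarith)).comp y
        ((hasDerivAt_id y).add_const (1/2))
      simpa [Function.comp_def] using this
    exact h1.sub h2
  · intro y hy
    have hy : (0:ℝ) < y := hy
    have := inv_strictAnti₀ hy (by linarith : y < y + 1/2)
    linarith

lemma auxF_convex (n : ℕ) : ConvexOn ℝ (Set.Ioi (0:ℝ)) (auxF n) := by
  refine convexOn_of_hasDerivAt2 (convex_Ioi 0) isOpen_Ioi
    (f' := fun y => (Real.log (y + 1/2) + 1)
      + (∑ j ∈ Finset.range (n + 2), (y + 1 + (j:ℝ))⁻¹) - Real.log (n + 1))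
    (f'' := fun y => (y + 1/2)⁻¹ + (∑ j ∈ Finset.range (n + 2), -(((y + 1 + (j:ℝ))^2)⁻¹)))
    ?_ ?_ ?_
  · intro y hy
    have hy : (0:ℝ) < y := hy
    have h1 : HasDerivAt (fun t : ℝ => (t + 1/2) * Real.log (t + 1/2))
        (Real.log (y + 1/2) + 1) y := by
      have := (Real.hasDerivAt_mul_log (x := y + 1/2) (by linarith)).comp y
        ((hasDerivAt_id y).add_const (1/2))
      simpa [Function.comp_def] using this
    have h2 : HasDerivAt (fun t : ℝ => ∑ j ∈ Finset.range (n + 2), Real.log (t + 1 + j))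
        (∑ j ∈ Finset.range (n + 2), (y + 1 + (j:ℝ))⁻¹) y := by
      refine HasDerivAt.fun_sum (fun j _ => ?_)
      have hpos : (0:ℝ) < y + 1 + j := by
        have := Nat.cast_nonneg (α := ℝ) j; linarith
      have := (Real.hasDerivAt_log hpos.ne').comp y
        (((hasDerivAt_id y).add_const (1:ℝ)).add_const (j:ℝ))
      simpa [Function.comp_def] using this
    have h3 : HasDerivAt (fun t : ℝ => (t + 1) * Real.log (n + 1) +
        Real.log (Nat.factorial (n + 1))) (Real.log (n + 1)) y := by
      have := (((hasDerivAt_id y).add_const (1:ℝ)).mul_const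
        (Real.log (n + 1))).add_const (Real.log (Nat.factorial (n + 1)))
      simpa using this
    have := (h1.add h2).sub h3
    exact this
  · intro y hy
    have hy : (0:ℝ) < y := hy
    have h1 : HasDerivAt (fun t : ℝ => Real.log (t + 1/2) + 1) ((y + 1/2)⁻¹) y := by
      have := ((Real.hasDerivAt_log (x := y + 1/2) (by linarith)).comp y
        ((hasDerivAt_id y).add_const (1/2))).add_const 1
      simpa using this
    have h2 : HasDerivAt (fun t : ℝ => ∑ j ∈ Finset.range (n + 2), (t + 1 + (j:ℝ))⁻¹)
        (∑ j ∈ Finset.range (n + 2), -(((y + 1 + (j:ℝ))^2)⁻¹)) y := by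
      refine HasDerivAt.fun_sum (fun j _ => ?_)
      have hpos : (0:ℝ) < y + 1 + j := by
        have := Nat.cast_nonneg (α := ℝ) j; linarith
      have := (((hasDerivAt_id y).add_const (1:ℝ)).add_const (j:ℝ)).inv hpos.ne'
      exact this.congr_deriv (by simp only [id_eq]; ring)
    have := (h1.add h2).sub_const (Real.log (n + 1))
    exact this
  · intro y hy
    have hy : (0:ℝ) < y := hy
    have key : ∀ j ∈ Finset.range (n + 2),
        ((y + 1 + (j:ℝ))^2)⁻¹ ≤ (y + 1/2 + (j:ℝ))⁻¹ - (y + 1/2 + ((j:ℝ)+1))⁻¹ := by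
      intro j _
      have hj : (0:ℝ) ≤ j := Nat.cast_nonneg j
      have p1 : (0:ℝ) < y + 1/2 + j := by linarith
      have p2 : (0:ℝ) < y + 1/2 + (j+1) := by linarith
      have p3 : (0:ℝ) < y + 1 + j := by linarith
      have hid : (y + 1/2 + (j:ℝ))⁻¹ - (y + 1/2 + ((j:ℝ)+1))⁻¹
          = ((y + 1/2 + (j:ℝ)) * (y + 1/2 + ((j:ℝ)+1)))⁻¹ := by
        field_simp
        ring
      rw [hid]
      have hle : (y + 1/2 + (j:ℝ)) * (y + 1/2 + ((j:ℝ)+1)) ≤ (y + 1 + (j:ℝ))^2 := by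
        nlinarith
      exact inv_anti₀ (by positivity) hle
    have sum_le : ∑ j ∈ Finset.range (n + 2), ((y + 1 + (j:ℝ))^2)⁻¹
        ≤ (y + 1/2)⁻¹ - (y + 1/2 + (n + 2 : ℕ))⁻¹ := by
      calc ∑ j ∈ Finset.range (n + 2), ((y + 1 + (j:ℝ))^2)⁻¹
          ≤ ∑ j ∈ Finset.range (n + 2),
              ((fun k : ℕ => (y + 1/2 + (k:ℝ))⁻¹) j
                - (fun k : ℕ => (y + 1/2 + (k:ℝ))⁻¹) (j+1)) := by
            refine Finset.sum_le_sum (fun j hj => ?_)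
            have := key j hj
            push_cast
            push_cast at this
            linarith
        _ = (y + 1/2 + ((0:ℕ):ℝ))⁻¹ - (y + 1/2 + ((n+2:ℕ):ℝ))⁻¹ := Finset.sum_range_sub' _ _
        _ = (y + 1/2)⁻¹ - (y + 1/2 + (n + 2 : ℕ))⁻¹ := by norm_num
    have hpos2 : (0:ℝ) < (y + 1/2 + (n + 2 : ℕ))⁻¹ := by positivity
    show (0:ℝ) ≤ (y + 1/2)⁻¹ + ∑ j ∈ Finset.range (n + 2), -(((y + 1 + (j:ℝ))^2)⁻¹)
    rw [Finset.sum_neg_distrib]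
    linarith

lemma auxF_eq (n : ℕ) {y : ℝ} (hy : 0 < y) :
    auxF n y = (y + 1/2) * Real.log (y + 1/2) - Real.log (Real.GammaSeq (y + 1) (n + 1)) := by
  have hs : (0:ℝ) < y + 1 := by linarith
  have hprodpos : ∀ j ∈ Finset.range (n + 1 + 1), (0:ℝ) < y + 1 + j := by
    intro j _
    have := Nat.cast_nonneg (α := ℝ) j
    linarith
  have hlog : Real.log (Real.GammaSeq (y + 1) (n + 1))
      = (y + 1) * Real.log (n + 1) + Real.log (Nat.factorial (n + 1))
        - ∑ j ∈ Finset.range (n + 2), Real.log (y + 1 + j) := by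
    unfold Real.GammaSeq
    rw [Real.log_div (by positivity) (by positivity), Real.log_mul (by positivity) (by positivity),
      Real.log_rpow (by positivity), Real.log_prod (fun j hj => (hprodpos j hj).ne')]
    push_cast
    ring_nf
  rw [hlog]
  unfold auxF
  ring

lemma auxV_convex : ConvexOn ℝ (Set.Ioi (0:ℝ)) auxV := by
  refine convexOn_of_tendsto' (convex_Ioi 0) auxF_convex (fun y hy => ?_)
  have hy : (0:ℝ) < y := hy
  have hG : 0 < Real.Gamma (y + 1) := Real.Gamma_pos_of_pos (by linarith)
  have h0 : Tendsto (fun n : ℕ => Real.GammaSeq (y + 1) (n + 1)) atTop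
      (nhds (Real.Gamma (y + 1))) :=
    (Real.GammaSeq_tendsto_Gamma (y + 1)).comp (tendsto_add_atTop_nat 1)
  have hlog : Tendsto (fun n : ℕ => Real.log (Real.GammaSeq (y + 1) (n + 1))) atTop
      (nhds (Real.log (Real.Gamma (y + 1)))) :=
    ((Real.continuousAt_log hG.ne').tendsto).comp h0
  have := Tendsto.sub (tendsto_const_nhds
    (x := (y + 1/2) * Real.log (y + 1/2)) (f := atTop (α := ℕ))) hlog
  exact this.congr (fun n => (auxF_eq n hy).symm)

end BinPseudoAux

/-- `f` is strictly decreasing on `(0, T/2]` and strictly increasing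
on `[T/2, T)`. -/
theorem binPseudoLik_monotonicity (T : ℝ) (hT : 0 < T) :
    StrictAntiOn (binPseudoLik T) (Set.Ioc 0 (T / 2)) ∧
      StrictMonoOn (binPseudoLik T) (Set.Ico (T / 2) T) := by
  have hs : Convex ℝ (Set.Ioo (0:ℝ) T) := convex_Ioo 0 T
  have hpos : ∀ x ∈ Set.Ioo (0:ℝ) T, 0 < binPseudoLik T x := by
    rintro x ⟨hx0, hxT⟩
    have h1 : 0 < Real.Gamma (T + 1) := Real.Gamma_pos_of_pos (by linarith)
    have h2 : 0 < Real.Gamma (x + 1) := Real.Gamma_pos_of_pos (by linarith)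
    have h3 : 0 < Real.Gamma (T - x + 1) := Real.Gamma_pos_of_pos (by linarith)
    have h4 : 0 < (x / T) ^ x := Real.rpow_pos_of_pos (by positivity) _
    have h5 : (0:ℝ) < (T - x) / T := by
      have : 0 < T - x := by linarith
      positivity
    have h6 : 0 < ((T - x) / T) ^ (T - x) := Real.rpow_pos_of_pos h5 _
    unfold binPseudoLik
    positivity
  have hsymm : ∀ x : ℝ, binPseudoLik T (T - x) = binPseudoLik T x := by
    intro x
    unfold binPseudoLik
    rw [sub_sub_cancel]
    ring
  have hsub : Set.Ioo (0:ℝ) T ⊆ Set.Ioi (0:ℝ) := fun x hx => hx.1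
  have hrefl : ∀ x ∈ Set.Ioo (0:ℝ) T, T - x ∈ Set.Ioi (0:ℝ) := by
    rintro x ⟨hx0, hxT⟩
    simpa using sub_pos.mpr hxT
  have HR1 : StrictConvexOn ℝ (Set.Ioo (0:ℝ) T) auxR := auxR_strictConvex.subset hsub hs
  have HR2 : StrictConvexOn ℝ (Set.Ioo (0:ℝ) T) (fun x => auxR (T - x)) :=
    strictConvexOn_comp_sub auxR_strictConvex T hs hrefl
  have HV1 : ConvexOn ℝ (Set.Ioo (0:ℝ) T) auxV := auxV_convex.subset hsub hs
  have HV2 : ConvexOn ℝ (Set.Ioo (0:ℝ) T) (fun x => auxV (T - x)) :=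
    convexOn_comp_sub auxV_convex T hs hrefl
  have Hc : ConvexOn ℝ (Set.Ioo (0:ℝ) T)
      (fun _ : ℝ => Real.log (Real.Gamma (T + 1)) - T * Real.log T) := convexOn_const _ hs
  have H : StrictConvexOn ℝ (Set.Ioo (0:ℝ) T)
      (auxR + (fun x => auxR (T - x)) + (auxV + (fun x => auxV (T - x))
        + fun _ => Real.log (Real.Gamma (T + 1)) - T * Real.log T)) :=
    (HR1.add HR2).add_convexOn ((HV1.add HV2).add Hc)
  have hconv : StrictConvexOn ℝ (Set.Ioo (0:ℝ) T) (fun x => Real.log (binPseudoLik T x)) := by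
    refine strictConvexOn_congr' H (fun x hx => ?_)
    obtain ⟨hx0, hxT⟩ := hx
    have hTx : 0 < T - x := by linarith
    have h1 : 0 < Real.Gamma (T + 1) := Real.Gamma_pos_of_pos (by linarith)
    have h2 : 0 < Real.Gamma (x + 1) := Real.Gamma_pos_of_pos (by linarith)
    have h3 : 0 < Real.Gamma (T - x + 1) := Real.Gamma_pos_of_pos (by linarith)
    have hp : (0:ℝ) < x / T := by positivity
    have hq : (0:ℝ) < (T - x) / T := by positivity
    have hlog : Real.log (binPseudoLik T x)
        = Real.log (Real.Gamma (T + 1)) - Real.log (Real.Gamma (x + 1))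
          - Real.log (Real.Gamma (T - x + 1))
          + x * (Real.log x - Real.log T) + (T - x) * (Real.log (T - x) - Real.log T) := by
      unfold binPseudoLik
      rw [Real.log_mul (by positivity) (Real.rpow_pos_of_pos hq _).ne',
        Real.log_mul (by positivity) (Real.rpow_pos_of_pos hp _).ne',
        Real.log_div h1.ne' (by positivity),
        Real.log_mul h2.ne' h3.ne',
        Real.log_rpow hp, Real.log_rpow hq,
        Real.log_div hx0.ne' hT.ne', Real.log_div hTx.ne' hT.ne']
      ring
    simp only [Pi.add_apply]
    rw [hlog]
    unfold auxR auxV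
    ring
  have hloglt : ∀ u ∈ Set.Ioo (0:ℝ) T, ∀ v ∈ Set.Ioo (0:ℝ) T,
      Real.log (binPseudoLik T u) < Real.log (binPseudoLik T v) →
        binPseudoLik T u < binPseudoLik T v :=
    fun u hu v hv h => (Real.log_lt_log_iff (hpos _ hu) (hpos _ hv)).mp h
  constructor
  · intro x hx y hy hxy
    obtain ⟨hx0, hx2⟩ := hx
    obtain ⟨hy0, hy2⟩ := hy
    have hxs : x ∈ Set.Ioo (0:ℝ) T := ⟨hx0, by linarith⟩
    have hys : y ∈ Set.Ioo (0:ℝ) T := ⟨hy0, by linarith⟩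
    have hTxs : T - x ∈ Set.Ioo (0:ℝ) T := ⟨by linarith, by linarith⟩
    have hd : 0 < T - 2*x := by linarith
    have ha : 0 < (T - x - y)/(T - 2*x) := div_pos (by linarith) hd
    have hb : 0 < (y - x)/(T - 2*x) := div_pos (by linarith) hd
    have hab : (T - x - y)/(T - 2*x) + (y - x)/(T - 2*x) = 1 := by
      rw [← add_div, div_eq_one_iff_eq hd.ne']
      ring
    have hne : x ≠ T - x := by intro h; linarith
    have h2 := hconv.2 hxs hTxs hne ha hb hab
    simp only [smul_eq_mul] at h2
    have hcomb : (T - x - y)/(T - 2*x) * x + (y - x)/(T - 2*x) * (T - x) = y := by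
      rw [div_mul_eq_mul_div, div_mul_eq_mul_div, ← add_div, div_eq_iff hd.ne']
      ring
    rw [hcomb, hsymm x] at h2
    have heq : (T - x - y)/(T - 2*x) * Real.log (binPseudoLik T x)
        + (y - x)/(T - 2*x) * Real.log (binPseudoLik T x) = Real.log (binPseudoLik T x) := by
      rw [← add_mul, hab, one_mul]
    exact hloglt _ hys _ hxs (by linarith)
  · intro x hx y hy hxy
    obtain ⟨hx1, hx2⟩ := hx
    obtain ⟨hy1, hy2⟩ := hy
    have hxs : x ∈ Set.Ioo (0:ℝ) T := ⟨by linarith, by linarith⟩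
    have hys : y ∈ Set.Ioo (0:ℝ) T := ⟨by linarith, hy2⟩
    have hTys : T - y ∈ Set.Ioo (0:ℝ) T := ⟨by linarith, by linarith⟩
    have hd : 0 < 2*y - T := by linarith
    have ha : 0 < (y - x)/(2*y - T) := div_pos (by linarith) hd
    have hb : 0 < (x - (T - y))/(2*y - T) := div_pos (by linarith) hd
    have hab : (y - x)/(2*y - T) + (x - (T - y))/(2*y - T) = 1 := by
      rw [← add_div, div_eq_one_iff_eq hd.ne']
      ring
    have hne : T - y ≠ y := by intro h; linarith
    have h2 := hconv.2 hTys hys hne ha hb hab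
    simp only [smul_eq_mul] at h2
    have hcomb : (y - x)/(2*y - T) * (T - y) + (x - (T - y))/(2*y - T) * y = x := by
      rw [div_mul_eq_mul_div, div_mul_eq_mul_div, ← add_div, div_eq_iff hd.ne']
      ring
    rw [hcomb, hsymm y] at h2
    have heq : (y - x)/(2*y - T) * Real.log (binPseudoLik T y)
        + (x - (T - y))/(2*y - T) * Real.log (binPseudoLik T y)
          = Real.log (binPseudoLik T y) := by
      rw [← add_mul, hab, one_mul]
    exact hloglt _ hxs _ hys (by linarith)
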